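/- The exact block-pulse spectrum of the Riemann–Liouville integral of a block-pulse function is given by the operational matrix column: for β > 0 and 1 ≤ j ≤ m, the average of I^β v_j over the interval [(i−1)h, ih) equals (h^β/Γ(β+2))·[(i−j+1)^{β+1} − 2(i−j)^{β+1} + (i−j−1)^{β+1}] for i > j, equals h^β/Γ(β+2) for i = j, and equals 0 for i < j. -/
import Mathlib

noncomputable def RLintegral (β : ℝ) (f : ℝ → ℝ) (t : ℝ) : ℝ :=
  (1 / Real.Gamma β) * ∫ τ in (0:ℝ)..t, (t - τ) ^ (β - 1) * f τ

noncomputable def blockPulse (h : ℝ) (i : ℕ) (t : ℝ) : ℝ :=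
  if ((i:ℝ) - 1) * h ≤ t ∧ t < (i:ℝ) * h then 1 else 0

open MeasureTheory intervalIntegral

lemma bp_ae_ne (b : ℝ) : ∀ᵐ τ : ℝ, τ ≠ b := by
  have : (volume : Measure ℝ) {b} = 0 := Real.volume_singleton
  exact ae_iff.mpr (by simpa using this)

lemma aux_integrable (t c d r : ℝ) (hr : -1 < r) :
    IntervalIntegrable (fun τ => (t - τ) ^ r) volume c d := by
  have := (intervalIntegral.intervalIntegrable_rpow' (a := t - c) (b := t - d) hr).comp_sub_left t
  simpa using this

lemma aux_integral (t c d r : ℝ) (hr : -1 < r) :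
    ∫ τ in c..d, (t - τ) ^ r = ((t - c) ^ (r + 1) - (t - d) ^ (r + 1)) / (r + 1) := by
  have h1 := intervalIntegral.integral_comp_sub_left (a := c) (b := d) (fun u : ℝ => u ^ r) t
  rw [h1, integral_rpow (Or.inl hr)]

lemma aux_integrable' (s c d r : ℝ) (hr : -1 < r) :
    IntervalIntegrable (fun t => (t - s) ^ r) volume c d := by
  have := (intervalIntegral.intervalIntegrable_rpow' (a := c - s) (b := d - s) hr).comp_sub_right s
  simpa using this

lemma aux_integral' (s c d r : ℝ) (hr : -1 < r) :
    ∫ t in c..d, (t - s) ^ r = ((d - s) ^ (r + 1) - (c - s) ^ (r + 1)) / (r + 1) := by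
  have h1 := intervalIntegral.integral_comp_sub_right (a := c) (b := d) (fun u : ℝ => u ^ r) s
  rw [h1, integral_rpow (Or.inl hr)]

lemma bp_zero_lt {h : ℝ} {j : ℕ} {t : ℝ} (ht : t < ((j:ℝ) - 1) * h) :
    blockPulse h j t = 0 := by
  unfold blockPulse
  rw [if_neg]
  rintro ⟨h1, -⟩
  linarith

lemma bp_zero_ge {h : ℝ} {j : ℕ} {t : ℝ} (ht : (j:ℝ) * h ≤ t) :
    blockPulse h j t = 0 := by
  unfold blockPulse
  rw [if_neg]
  rintro ⟨-, h2⟩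
  linarith

lemma bp_one {h : ℝ} {j : ℕ} {t : ℝ} (h1 : ((j:ℝ) - 1) * h ≤ t) (h2 : t < (j:ℝ) * h) :
    blockPulse h j t = 1 := if_pos ⟨h1, h2⟩

/-- Piece where the block pulse vanishes because we are left of its support. -/
lemma piece_zero_left (β h : ℝ) (j : ℕ) (t c d : ℝ) (hcd : c ≤ d)
    (hd : d ≤ ((j:ℝ) - 1) * h) :
    IntervalIntegrable (fun τ => (t - τ) ^ (β - 1) * blockPulse h j τ) volume c d ∧
      ∫ τ in c..d, (t - τ) ^ (β - 1) * blockPulse h j τ = 0 := by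
  set A := ((j:ℝ) - 1) * h with hA
  have hae : ∀ᵐ τ : ℝ, τ ∈ Set.uIoc c d → (t - τ) ^ (β - 1) * blockPulse h j τ = 0 := by
    filter_upwards [bp_ae_ne A] with τ hτA hτ
    rw [Set.uIoc_of_le hcd] at hτ
    have : τ < A := lt_of_le_of_ne (hτ.2.trans hd) hτA
    rw [bp_zero_lt this, mul_zero]
  have h2 : (fun τ => (t - τ) ^ (β - 1) * blockPulse h j τ)
      =ᶠ[ae (volume.restrict (Set.uIoc c d))] (fun _ => 0) :=
    (ae_restrict_iff' measurableSet_uIoc).mpr hae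
  constructor
  · rw [intervalIntegrable_iff]
    exact (integrable_zero _ _ _).congr h2.symm
  · exact intervalIntegral.integral_zero_ae hae

/-- Piece where the block pulse vanishes because we are right of its support. -/
lemma piece_zero_right (β h : ℝ) (j : ℕ) (t c d : ℝ) (hcd : c ≤ d)
    (hc : (j:ℝ) * h ≤ c) :
    IntervalIntegrable (fun τ => (t - τ) ^ (β - 1) * blockPulse h j τ) volume c d ∧
      ∫ τ in c..d, (t - τ) ^ (β - 1) * blockPulse h j τ = 0 := by
  have hae : ∀ᵐ τ : ℝ, τ ∈ Set.uIoc c d → (t - τ) ^ (β - 1) * blockPulse h j τ = 0 := by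
    filter_upwards with τ hτ
    rw [Set.uIoc_of_le hcd] at hτ
    have : (j:ℝ) * h ≤ τ := hc.trans hτ.1.le
    rw [bp_zero_ge this, mul_zero]
  have h2 : (fun τ => (t - τ) ^ (β - 1) * blockPulse h j τ)
      =ᶠ[ae (volume.restrict (Set.uIoc c d))] (fun _ => 0) :=
    (ae_restrict_iff' measurableSet_uIoc).mpr hae
  constructor
  · rw [intervalIntegrable_iff]
    exact (integrable_zero _ _ _).congr h2.symm
  · exact intervalIntegral.integral_zero_ae hae

/-- Piece inside the support of the block pulse. -/
lemma piece_one (β h : ℝ) (hβ : 0 < β) (j : ℕ) (t c d : ℝ) (hcd : c ≤ d)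
    (hc : ((j:ℝ) - 1) * h ≤ c) (hd : d ≤ (j:ℝ) * h) :
    IntervalIntegrable (fun τ => (t - τ) ^ (β - 1) * blockPulse h j τ) volume c d ∧
      ∫ τ in c..d, (t - τ) ^ (β - 1) * blockPulse h j τ
        = ((t - c) ^ β - (t - d) ^ β) / β := by
  have hr : (-1 : ℝ) < β - 1 := by linarith
  have hae : ∀ᵐ τ : ℝ, τ ∈ Set.uIoc c d →
      (t - τ) ^ (β - 1) * blockPulse h j τ = (t - τ) ^ (β - 1) := by
    filter_upwards [bp_ae_ne ((j:ℝ) * h)] with τ hτB hτ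
    rw [Set.uIoc_of_le hcd] at hτ
    have h1 : ((j:ℝ) - 1) * h ≤ τ := hc.trans hτ.1.le
    have h2 : τ < (j:ℝ) * h := lt_of_le_of_ne (hτ.2.trans hd) hτB
    rw [bp_one h1 h2, mul_one]
  have h2 : (fun τ => (t - τ) ^ (β - 1) * blockPulse h j τ)
      =ᶠ[ae (volume.restrict (Set.uIoc c d))] (fun τ => (t - τ) ^ (β - 1)) :=
    (ae_restrict_iff' measurableSet_uIoc).mpr hae
  constructor
  · rw [intervalIntegrable_iff]
    have := aux_integrable t c d (β - 1) hr
    rw [intervalIntegrable_iff] at this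
    exact this.congr h2.symm
  · rw [intervalIntegral.integral_congr_ae hae, aux_integral t c d (β - 1) hr]
    norm_num

theorem spectrum_of_rl_integral_blockPulse (β h : ℝ) (hβ : 0 < β) (hh : 0 < h)
    (m i j : ℕ) (hi : 1 ≤ i) (him : i ≤ m) (hj : 1 ≤ j) (hjm : j ≤ m) :
    (1 / h) * ∫ t in (((i:ℝ) - 1) * h)..((i:ℝ) * h), RLintegral β (blockPulse h j) t =
      if i < j then 0
      else if i = j then h ^ β / Real.Gamma (β + 2)
      else (h ^ β / Real.Gamma (β + 2)) *
        (((i:ℝ) - (j:ℝ) + 1) ^ (β + 1) - 2 * ((i:ℝ) - (j:ℝ)) ^ (β + 1)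
          + ((i:ℝ) - (j:ℝ) - 1) ^ (β + 1)) := by
  have hΓ : Real.Gamma β ≠ 0 := (Real.Gamma_pos_of_pos hβ).ne'
  have hΓ2 : Real.Gamma (β + 2) = (β + 1) * (β * Real.Gamma β) := by
    have e1 : β + 2 = (β + 1) + 1 := by ring
    rw [e1, Real.Gamma_add_one (by linarith), Real.Gamma_add_one hβ.ne']
  set A := ((j:ℝ) - 1) * h with hAdef
  set B := (j:ℝ) * h with hBdef
  set C := ((i:ℝ) - 1) * h with hCdef
  set D := (i:ℝ) * h with hDdef
  have hCD : C ≤ D := by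
    have : (i:ℝ) - 1 ≤ (i:ℝ) := by linarith
    exact mul_le_mul_of_nonneg_right this hh.le
  have hC0 : 0 ≤ C := by
    have h1 : (1:ℝ) ≤ (i:ℝ) := by exact_mod_cast hi
    have : (0:ℝ) ≤ (i:ℝ) - 1 := by linarith
    exact mul_nonneg this hh.le
  have hA0 : 0 ≤ A := by
    have h1 : (1:ℝ) ≤ (j:ℝ) := by exact_mod_cast hj
    have : (0:ℝ) ≤ (j:ℝ) - 1 := by linarith
    exact mul_nonneg this hh.le
  have hAB : A ≤ B := by
    have : (j:ℝ) - 1 ≤ (j:ℝ) := by linarith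
    exact mul_le_mul_of_nonneg_right this hh.le
  have hr : (-1:ℝ) < β - 1 := by linarith
  rcases lt_trichotomy i j with hij | hij | hij
  · -- i < j : result 0
    rw [if_pos hij]
    have hDA : D ≤ A := by
      have : (i:ℝ) ≤ (j:ℝ) - 1 := by
        have : (i:ℝ) + 1 ≤ (j:ℝ) := by exact_mod_cast hij
        linarith
      exact mul_le_mul_of_nonneg_right this hh.le
    have hRL : Set.EqOn (RLintegral β (blockPulse h j)) (fun _ => 0) (Set.uIcc C D) := by
      intro t ht
      rw [Set.uIcc_of_le hCD] at ht
      have h0t : (0:ℝ) ≤ t := hC0.trans ht.1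
      have htA : t ≤ A := ht.2.trans hDA
      unfold RLintegral
      have := (piece_zero_left β h j t 0 t h0t htA).2
      rw [this, mul_zero]
    rw [intervalIntegral.integral_congr hRL]
    simp
  · -- i = j
    subst hij
    rw [if_neg (lt_irrefl i), if_pos rfl]
    have hRL : Set.EqOn (RLintegral β (blockPulse h i))
        (fun t => (1 / (β * Real.Gamma β)) * (t - A) ^ β) (Set.uIcc C D) := by
      intro t ht
      rw [Set.uIcc_of_le hCD] at ht
      have htA : A ≤ t := le_of_eq_of_le (by rw [hAdef, hCdef]) ht.1
      have htB : t ≤ B := le_trans ht.2 (le_of_eq (by rw [hBdef, hDdef]))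
      unfold RLintegral
      have p1 := piece_zero_left β h i t 0 A hA0 le_rfl
      have p2 := piece_one β h hβ i t A t htA le_rfl htB
      have hsplit := intervalIntegral.integral_add_adjacent_intervals p1.1 p2.1
      rw [← hsplit, p1.2, p2.2, sub_self, Real.zero_rpow hβ.ne']
      ring
    rw [intervalIntegral.integral_congr hRL,
      intervalIntegral.integral_const_mul, aux_integral' A C D β (by linarith)]
    have hDA : D - A = h := by rw [hDdef, hAdef]; ring
    have hCA : C - A = 0 := by rw [hCdef, hAdef]; ring
    rw [hDA, hCA, Real.zero_rpow (by linarith : β + 1 ≠ 0), sub_zero]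
    have hhb : h ^ (β + 1) = h ^ β * h := by
      rw [Real.rpow_add hh, Real.rpow_one]
    rw [hhb, hΓ2]
    field_simp
    try ring
    try tauto
  · -- i > j
    have hne : ¬ i < j := by omega
    have hne2 : i ≠ j := by omega
    rw [if_neg hne, if_neg hne2]
    have hji : (j:ℝ) ≤ (i:ℝ) - 1 := by
      have : (j:ℝ) + 1 ≤ (i:ℝ) := by exact_mod_cast hij
      linarith
    have hBC : B ≤ C := mul_le_mul_of_nonneg_right hji hh.le
    have hRL : Set.EqOn (RLintegral β (blockPulse h j))
        (fun t => (1 / (β * Real.Gamma β)) * ((t - A) ^ β - (t - B) ^ β))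
        (Set.uIcc C D) := by
      intro t ht
      rw [Set.uIcc_of_le hCD] at ht
      have htB : B ≤ t := hBC.trans ht.1
      unfold RLintegral
      have p1 := piece_zero_left β h j t 0 A hA0 le_rfl
      have p2 := piece_one β h hβ j t A B hAB le_rfl le_rfl
      have p3 := piece_zero_right β h j t B t htB le_rfl
      have hs1 := intervalIntegral.integral_add_adjacent_intervals p1.1 p2.1
      have hs2 := intervalIntegral.integral_add_adjacent_intervals (p1.1.trans p2.1) p3.1
      rw [← hs2, ← hs1, p1.2, p2.2, p3.2]
      ring
    rw [intervalIntegral.integral_congr hRL, intervalIntegral.integral_const_mul]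
    have hint1 := aux_integrable' A C D β (by linarith)
    have hint2 := aux_integrable' B C D β (by linarith)
    rw [intervalIntegral.integral_sub hint1 hint2,
      aux_integral' A C D β (by linarith), aux_integral' B C D β (by linarith)]
    have hDA : D - A = ((i:ℝ) - (j:ℝ) + 1) * h := by rw [hDdef, hAdef]; ring
    have hCA : C - A = ((i:ℝ) - (j:ℝ)) * h := by rw [hCdef, hAdef]; ring
    have hDB : D - B = ((i:ℝ) - (j:ℝ)) * h := by rw [hDdef, hBdef]; ring
    have hCB : C - B = ((i:ℝ) - (j:ℝ) - 1) * h := by rw [hCdef, hBdef]; ring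
    have hK0 : (0:ℝ) ≤ (i:ℝ) - (j:ℝ) - 1 := by linarith
    have hK1 : (0:ℝ) ≤ (i:ℝ) - (j:ℝ) := by linarith
    have hK2 : (0:ℝ) ≤ (i:ℝ) - (j:ℝ) + 1 := by linarith
    rw [hDA, hCA, hDB, hCB,
      Real.mul_rpow hK2 hh.le, Real.mul_rpow hK1 hh.le, Real.mul_rpow hK0 hh.le]
    have hhb : h ^ (β + 1) = h ^ β * h := by
      rw [Real.rpow_add hh, Real.rpow_one]
    rw [hhb, hΓ2]
    field_simp
    try ring
    try tauto
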